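/- Let w ∈ B_3 be positive with closure a knot. Then B_1(w) ∈ {[[0,-1],[1,-1]], [[-1,1],[-1,0]]}, whose eigenvalues are the primitive cube roots of unity; consequently there is ε > 0 such that for real t ∈ (1-ε, 1+ε), the matrix B_t(w) has non-real complex-conjugate eigenvalues and spectral radius t^{#w/2}. -/

import Mathlib

open Complex

/-- The positive generators σ₁, σ₂ of the braid group `B₃`. -/
inductive BGen
  | s1 | s2
deriving DecidableEq

/-- The reduced Burau representation of `B₃` evaluated at `t ∈ ℂ`, on the generators. -/
noncomputable def burauGenC (t : ℂ) : BGen → Matrix (Fin 2) (Fin 2) ℂ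
  | .s1 => !![-t, 1; 0, 1]
  | .s2 => !![1, 0; t, -t]

/-- The Burau matrix of a positive word, at `t ∈ ℂ`. -/
noncomputable def burauWordC (t : ℂ) (w : List BGen) : Matrix (Fin 2) (Fin 2) ℂ :=
  (w.map (burauGenC t)).prod

/-- The permutation of the strands induced by each generator. -/
def braidPerm : BGen → Equiv.Perm (Fin 3)
  | .s1 => Equiv.swap 0 1
  | .s2 => Equiv.swap 1 2

/-- Real form of the Burau generators. -/
def burauGenR (t : ℝ) : BGen → Matrix (Fin 2) (Fin 2) ℝ
  | .s1 => !![-t, 1; 0, 1]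
  | .s2 => !![1, 0; t, -t]

/-- Real form of the Burau word matrix. -/
def burauWordR (t : ℝ) (w : List BGen) : Matrix (Fin 2) (Fin 2) ℝ :=
  (w.map (burauGenR t)).prod

lemma burau_map (x : ℝ) (w : List BGen) :
    (Complex.ofRealHom.mapMatrix : Matrix (Fin 2) (Fin 2) ℝ →+* _) (burauWordR x w)
      = burauWordC (x : ℂ) w := by
  rw [burauWordR, burauWordC, map_list_prod, List.map_map]
  congr 1
  apply List.map_congr_left
  intro g _
  cases g <;> simp [burauGenR, burauGenC] <;>
    ext i j <;> fin_cases i <;> fin_cases j <;>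
    simp [Matrix.map_apply]

lemma burau_det (x : ℝ) (w : List BGen) :
    (burauWordR x w).det = (-x) ^ w.length := by
  induction w with
  | nil => simp [burauWordR]
  | cons g w ih =>
    have : burauWordR x (g :: w) = burauGenR x g * burauWordR x w := by
      simp [burauWordR, List.prod_cons]
    rw [this, Matrix.det_mul, ih]
    cases g <;> simp [burauGenR, Matrix.det_fin_two] <;> ring

lemma burau_cont (w : List BGen) : Continuous fun x : ℝ => burauWordR x w := by
  induction w with
  | nil => simpa [burauWordR] using continuous_const
  | cons g w ih =>
    have h : (fun x : ℝ => burauWordR x (g :: w))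
        = fun x => burauGenR x g * burauWordR x w := by
      funext x; simp [burauWordR, List.prod_cons]
    rw [h]
    refine Continuous.matrix_mul ?_ ih
    apply continuous_matrix
    intro i j
    cases g <;> fin_cases i <;> fin_cases j <;>
      simp [burauGenR] <;> fun_prop

lemma key (w : List BGen) :
    ((w.map braidPerm).prod = 1 ∧ burauWordC 1 w = 1) ∨
    ((w.map braidPerm).prod = Equiv.swap 0 1 ∧ burauWordC 1 w = !![-1,1;0,1]) ∨
    ((w.map braidPerm).prod = Equiv.swap 1 2 ∧ burauWordC 1 w = !![1,0;1,-1]) ∨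
    ((w.map braidPerm).prod = Equiv.swap 0 2 ∧ burauWordC 1 w = !![0,-1;-1,0]) ∨
    ((w.map braidPerm).prod = Equiv.swap 0 1 * Equiv.swap 1 2 ∧ burauWordC 1 w = !![0,-1;1,-1]) ∨
    ((w.map braidPerm).prod = Equiv.swap 1 2 * Equiv.swap 0 1 ∧ burauWordC 1 w = !![-1,1;-1,0]) := by
  induction w with
  | nil => left; constructor <;> rfl
  | cons g w ih =>
    have hp : ((g :: w).map braidPerm).prod = braidPerm g * (w.map braidPerm).prod := by
      simp [List.prod_cons]
    have hb : burauWordC 1 (g :: w) = burauGenC 1 g * burauWordC 1 w := by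
      simp [burauWordC, List.prod_cons]
    rw [hp, hb]
    rcases ih with ⟨h1, h2⟩ | ⟨h1, h2⟩ | ⟨h1, h2⟩ | ⟨h1, h2⟩ | ⟨h1, h2⟩ | ⟨h1, h2⟩ <;>
      rw [h1, h2] <;> cases g <;>
      simp only [burauGenC, braidPerm] <;>
      first
        | exact Or.inl ⟨by decide, by norm_num [Matrix.mul_fin_two, Matrix.one_fin_two, ← Matrix.ext_iff, Fin.forall_fin_two]⟩
        | exact Or.inr (Or.inl ⟨by decide, by norm_num [Matrix.mul_fin_two, Matrix.one_fin_two, ← Matrix.ext_iff, Fin.forall_fin_two]⟩)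
        | exact Or.inr (Or.inr (Or.inl ⟨by decide, by norm_num [Matrix.mul_fin_two, Matrix.one_fin_two, ← Matrix.ext_iff, Fin.forall_fin_two]⟩))
        | exact Or.inr (Or.inr (Or.inr (Or.inl ⟨by decide, by norm_num [Matrix.mul_fin_two, Matrix.one_fin_two, ← Matrix.ext_iff, Fin.forall_fin_two]⟩)))
        | exact Or.inr (Or.inr (Or.inr (Or.inr (Or.inl ⟨by decide, by norm_num [Matrix.mul_fin_two, Matrix.one_fin_two, ← Matrix.ext_iff, Fin.forall_fin_two]⟩))))
        | exact Or.inr (Or.inr (Or.inr (Or.inr (Or.inr ⟨by decide, by norm_num [Matrix.mul_fin_two, Matrix.one_fin_two, ← Matrix.ext_iff, Fin.forall_fin_two]⟩))))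

lemma spectrum_fin_two (A : Matrix (Fin 2) (Fin 2) ℂ) (z : ℂ) :
    z ∈ spectrum ℂ A ↔ z ^ 2 - A.trace * z + A.det = 0 := by
  rw [spectrum.mem_iff, Matrix.isUnit_iff_isUnit_det, isUnit_iff_ne_zero, not_not]
  have : ((algebraMap ℂ (Matrix (Fin 2) (Fin 2) ℂ)) z - A).det
      = z ^ 2 - A.trace * z + A.det := by
    simp [Matrix.det_fin_two, Matrix.trace_fin_two, Matrix.algebraMap_matrix_apply,
      Matrix.sub_apply]
    ring
  rw [this]

lemma omega_eq : Complex.exp (2 * Real.pi * Complex.I / 3)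
    = (↑(-1/2 : ℝ) + ↑(Real.sqrt 3 / 2 : ℝ) * Complex.I) := by
  have h : (2 * (Real.pi:ℂ) * Complex.I / 3) = ((2 * Real.pi / 3 : ℝ) : ℂ) * Complex.I := by
    push_cast; ring
  rw [h, Complex.exp_mul_I]
  have hc : Real.cos (2 * Real.pi / 3) = -1/2 := by
    have : 2 * Real.pi / 3 = Real.pi - Real.pi / 3 := by ring
    rw [this, Real.cos_pi_sub, Real.cos_pi_div_three]; norm_num
  have hs : Real.sin (2 * Real.pi / 3) = Real.sqrt 3 / 2 := by
    have : 2 * Real.pi / 3 = Real.pi - Real.pi / 3 := by ring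
    rw [this, Real.sin_pi_sub, Real.sin_pi_div_three]
  rw [← Complex.ofReal_cos, ← Complex.ofReal_sin, hc, hs]

lemma omega'_eq : Complex.exp (-(2 * Real.pi * Complex.I) / 3)
    = (↑(-1/2 : ℝ) - ↑(Real.sqrt 3 / 2 : ℝ) * Complex.I) := by
  have h : (-(2 * (Real.pi:ℂ) * Complex.I) / 3) = ((-(2 * Real.pi / 3) : ℝ) : ℂ) * Complex.I := by
    push_cast; ring
  rw [h, Complex.exp_mul_I]
  have hc : Real.cos (-(2 * Real.pi / 3)) = -1/2 := by
    rw [Real.cos_neg]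
    have : 2 * Real.pi / 3 = Real.pi - Real.pi / 3 := by ring
    rw [this, Real.cos_pi_sub, Real.cos_pi_div_three]; norm_num
  have hs : Real.sin (-(2 * Real.pi / 3)) = -(Real.sqrt 3 / 2) := by
    rw [Real.sin_neg]
    have : 2 * Real.pi / 3 = Real.pi - Real.pi / 3 := by ring
    rw [this, Real.sin_pi_sub, Real.sin_pi_div_three]
  rw [← Complex.ofReal_cos, ← Complex.ofReal_sin, hc, hs]
  push_cast; ring

lemma quad_roots (T dd : ℝ) (a b : ℝ) (hT : T = 2 * a) (hb : b ^ 2 = dd - a ^ 2) (z : ℂ) :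
    z ^ 2 - (T : ℂ) * z + (dd : ℝ) = (z - (↑a + ↑b * Complex.I)) * (z - (↑a - ↑b * Complex.I)) := by
  have hI : (Complex.I) ^ 2 = -1 := Complex.I_sq
  have hb' : (b : ℂ) ^ 2 = (dd : ℂ) - (a : ℂ) ^ 2 := by exact_mod_cast congrArg Complex.ofReal hb
  have hT' : (T : ℂ) = 2 * (a : ℂ) := by exact_mod_cast congrArg Complex.ofReal hT
  rw [hT']
  linear_combination ((b:ℂ)^2) * hI - hb'

/-- If `w` is a positive 3-braid whose closure is a knot (its strand
permutation is a 3-cycle), then `B_1(w)` is one of the two listed matrices, whose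
eigenvalues are the primitive cube roots of unity; consequently for real `t` near `1`
the matrix `B_t(w)` has non-real complex-conjugate eigenvalues and spectral radius
`t^{#w/2}`. -/
theorem burau_near_one_of_knot (w : List BGen)
    (hknot : ((w.map braidPerm).prod).IsThreeCycle) :
    (burauWordC 1 w = !![0, -1; 1, -1] ∨ burauWordC 1 w = !![-1, 1; -1, 0]) ∧
    spectrum ℂ (burauWordC 1 w) =
      {Complex.exp (2 * Real.pi * Complex.I / 3),
       Complex.exp (-(2 * Real.pi * Complex.I) / 3)} ∧
    ∃ ε > (0 : ℝ), ∀ x : ℝ, |x - 1| < ε →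
      (∃ z : ℂ, z.im ≠ 0 ∧
        spectrum ℂ (burauWordC (x : ℂ) w) = {z, (starRingEnd ℂ) z}) ∧
      spectralRadius ℂ (burauWordC (x : ℂ) w) = ENNReal.ofReal (x ^ (w.length / 2)) := by
  -- Part 1
  have hpart1 : burauWordC 1 w = !![0,-1;1,-1] ∨ burauWordC 1 w = !![-1,1;-1,0] := by
    rcases key w with ⟨h1,h2⟩|⟨h1,h2⟩|⟨h1,h2⟩|⟨h1,h2⟩|⟨h1,h2⟩|⟨h1,h2⟩
    · rw [h1] at hknot; exact absurd hknot.card_support (by decide)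
    · rw [h1] at hknot; exact absurd hknot.card_support (by decide)
    · rw [h1] at hknot; exact absurd hknot.card_support (by decide)
    · rw [h1] at hknot; exact absurd hknot.card_support (by decide)
    · exact Or.inl h2
    · exact Or.inr h2
  have htr1 : (burauWordC 1 w).trace = -1 := by
    rcases hpart1 with h | h <;> rw [h] <;> simp [Matrix.trace_fin_two]
  have hdet1 : (burauWordC 1 w).det = 1 := by
    rcases hpart1 with h | h <;> rw [h] <;> norm_num [Matrix.det_fin_two]
  -- Part 2
  have h3 : (Real.sqrt 3 / 2) ^ 2 = 1 - (-1/2 : ℝ) ^ 2 := by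
    rw [div_pow, Real.sq_sqrt (by norm_num : (0:ℝ) ≤ 3)]; norm_num
  have hspec1 : spectrum ℂ (burauWordC 1 w) =
      {Complex.exp (2 * Real.pi * Complex.I / 3),
       Complex.exp (-(2 * Real.pi * Complex.I) / 3)} := by
    ext z
    rw [spectrum_fin_two, htr1, hdet1, omega_eq, omega'_eq]
    have hq := quad_roots (-1) 1 (-1/2) (Real.sqrt 3 / 2) (by norm_num) h3 z
    rw [show z ^ 2 - (-1) * z + 1 = z ^ 2 - ((-1:ℝ):ℂ) * z + ((1:ℝ):ℂ) by push_cast; ring, hq]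
    simp [mul_eq_zero, sub_eq_zero, Set.mem_insert_iff]
  refine ⟨hpart1, hspec1, ?_⟩
  -- Part 3
  set n := w.length with hn
  -- `n` is even
  have heven : Even n := by
    have hsign : Equiv.Perm.sign ((w.map braidPerm).prod) = 1 := hknot.sign
    have hsign2 : Equiv.Perm.sign ((w.map braidPerm).prod) = (-1) ^ n := by
      rw [map_list_prod, List.map_map]
      have hrep : w.map (⇑Equiv.Perm.sign ∘ braidPerm) = List.replicate n (-1) := by
        rw [List.eq_replicate_iff]
        refine ⟨by simp [hn], ?_⟩
        intro b hb
        obtain ⟨g, _, rfl⟩ := List.mem_map.mp hb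
        cases g <;> decide
      rw [hrep, List.prod_replicate]
    rw [hsign2] at hsign
    by_contra h
    rw [Nat.not_even_iff_odd] at h
    rw [h.neg_one_pow] at hsign
    exact absurd hsign (by decide)
    -- combination with fact
  have hndiv : n / 2 * 2 = n := Nat.div_mul_cancel heven.two_dvd
  -- map relations
  have hmap : ∀ x : ℝ, burauWordC (x:ℂ) w = (burauWordR x w).map Complex.ofReal := by
    intro x
    rw [← burau_map x w, RingHom.mapMatrix_apply]
    rfl
  set T : ℝ → ℝ := fun x => (burauWordR x w).trace with hTdef
  have htrace : ∀ x : ℝ, (burauWordC (x:ℂ) w).trace = ((T x : ℝ) : ℂ) := by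
    intro x
    rw [hmap x]
    simp [Matrix.trace_fin_two, Matrix.map_apply, hTdef]
  have hdet : ∀ x : ℝ, (burauWordC (x:ℂ) w).det = ((x ^ n : ℝ) : ℂ) := by
    intro x
    rw [hmap x,
      show (burauWordR x w).map Complex.ofReal
        = Complex.ofRealHom.mapMatrix (burauWordR x w) from rfl,
      ← RingHom.map_det, burau_det, heven.neg_pow]
    rfl
  have hT1 : T 1 = -1 := by
    have h1 : ((T 1 : ℝ) : ℂ) = -1 := by
      rw [← htrace 1, Complex.ofReal_one, htr1]
    exact_mod_cast h1
  -- continuity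
  have hTc : Continuous T := (burau_cont w).matrix_trace
  have hcont : Continuous fun x : ℝ => T x ^ 2 - 4 * x ^ n :=
    (hTc.pow 2).sub (continuous_const.mul (continuous_pow n))
  have hD1 : T 1 ^ 2 - 4 * (1:ℝ) ^ n = -3 := by rw [hT1]; norm_num
  obtain ⟨δ, hδpos, hδ⟩ := Metric.continuousAt_iff.mp hcont.continuousAt 3 (by norm_num)
  refine ⟨min δ 1, lt_min hδpos one_pos, ?_⟩
  intro x hx
  have hxδ : dist x 1 < δ := by
    rw [Real.dist_eq]; exact lt_of_lt_of_le hx (min_le_left _ _)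
  have hx1 : |x - 1| < 1 := lt_of_lt_of_le hx (min_le_right _ _)
  have hxpos : 0 < x := by
    have := abs_lt.mp hx1; linarith [this.1]
  have hDx : T x ^ 2 - 4 * x ^ n < 0 := by
    have h := hδ hxδ
    rw [Real.dist_eq, hD1] at h
    have := abs_lt.mp h
    linarith [this.2]
  have h4pos : 0 < 4 * x ^ n - T x ^ 2 := by linarith
  set a : ℝ := T x / 2 with hadef
  set b : ℝ := Real.sqrt (4 * x ^ n - T x ^ 2) / 2 with hbdef
  have hbpos : 0 < b := div_pos (Real.sqrt_pos.mpr h4pos) two_pos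
  have hb2 : b ^ 2 = x ^ n - a ^ 2 := by
    rw [hbdef, hadef, div_pow, div_pow, Real.sq_sqrt h4pos.le]
    ring
  set z0 : ℂ := (↑a + ↑b * Complex.I) with hz0
  have hconj : (starRingEnd ℂ) z0 = ↑a - ↑b * Complex.I := by
    simp [hz0, map_add, map_mul, Complex.conj_ofReal, Complex.conj_I]
    ring
  have hfact : ∀ z : ℂ, z ^ 2 - ((T x : ℝ):ℂ) * z + ((x ^ n : ℝ):ℂ)
      = (z - z0) * (z - (starRingEnd ℂ) z0) := by
    intro z
    rw [hconj]
    exact quad_roots (T x) (x ^ n) a b (by rw [hadef]; ring) hb2 z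
  have hspecx : spectrum ℂ (burauWordC (x:ℂ) w) = {z0, (starRingEnd ℂ) z0} := by
    ext z
    rw [spectrum_fin_two, htrace x, hdet x, hfact z]
    simp [mul_eq_zero, sub_eq_zero, Set.mem_insert_iff]
  have him : z0.im = b := by simp [hz0]
  have habs : ‖z0‖ = x ^ (n / 2) := by
    rw [hz0, Complex.norm_add_mul_I]
    have hsum : a ^ 2 + b ^ 2 = x ^ n := by rw [hb2]; ring
    rw [hsum, show x ^ n = (x ^ (n/2)) ^ 2 by rw [← pow_mul, hndiv]]
    exact Real.sqrt_sq (by positivity)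
  constructor
  · exact ⟨z0, by rw [him]; exact hbpos.ne', hspecx⟩
  · have hrad : spectralRadius ℂ (burauWordC (x:ℂ) w)
        = ⨆ k ∈ spectrum ℂ (burauWordC (x:ℂ) w), (‖k‖₊ : ENNReal) := rfl
    rw [hrad, hspecx]
    rw [show ({z0, (starRingEnd ℂ) z0} : Set ℂ) = insert z0 {(starRingEnd ℂ) z0} from rfl,
      iSup_insert, iSup_singleton]
    have : (‖(starRingEnd ℂ) z0‖₊ : ENNReal) = (‖z0‖₊ : ENNReal) := by
      congr 1
      simp [nnnorm]
    rw [this, sup_idem, ← enorm_eq_nnnorm, ← ofReal_norm, habs]
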